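/- arXiv:1912.13287 — 6 statements merged into one kernel-verified Lean document; each statement's English description precedes it below -/
import Mathlib

section
/- Let D = (d_1,...,d_n) be a sequence of nonnegative integers and let α ≠ β be indices with d_α > d_β. Let D* be the sequence obtained from D by decrementing d_α by 1 and incrementing d_β by 1 (a levelling operation). If D* is not a permutation of D (equivalently, d_α ≥ d_β + 2), then the spread φ(D*) ≤ φ(D) − 2, where φ(D) = Σ_{1≤r<s≤n} |d_r − d_s|. -/
open Finset

/-! Only pairs meeting `{α, β}` change. Each third entry `x` contributes
`|d_α - x| + |d_β - x|`, which cannot grow when `d_α` and `d_β` move one step towards each other,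
while the pair `{α, β}` itself loses exactly `2`. -/

/-- A sequence is graphic if it is the degree sequence of a simple graph. -/
def IsGraphic {n : ℕ} (D : Fin n → ℕ) : Prop :=
  ∃ (G : SimpleGraph (Fin n)) (_ : DecidableRel G.Adj), ∀ i, G.degree i = D i

/-- The levelling operation: decrement entry `α` by 1, increment entry `β` by 1. -/
def lvl {n : ℕ} (D : Fin n → ℕ) (α β : Fin n) : Fin n → ℕ :=
  fun i => if i = α then D α - 1 else if i = β then D β + 1 else D i

/-- The spread `φ(D) = ∑_{r<s} |d_r - d_s|`. -/
def spread {n : ℕ} (D : Fin n → ℕ) : ℤ :=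
  ∑ r : Fin n, ∑ s : Fin n, if r < s then |(D r : ℤ) - (D s : ℤ)| else 0

/-- `A ≤ D ≤ B` coordinatewise. -/
def Between {n : ℕ} (A D B : Fin n → ℕ) : Prop := ∀ i, A i ≤ D i ∧ D i ≤ B i

/-- Volume of `D` w.r.t. lower boundary `A`. -/
def vol {n : ℕ} (A D : Fin n → ℕ) : ℕ := ∑ i, (D i - A i)

/-- An interval sequence `(A,B)` is realizable if it contains a graphic sequence. -/
def Realizable {n : ℕ} (A B : Fin n → ℕ) : Prop := ∃ D, IsGraphic D ∧ Between A D B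

/-- Two sequences are similar if one is a permutation of the other. -/
def SimilarSeq {n : ℕ} (D D' : Fin n → ℕ) : Prop :=
  ∃ σ : Equiv.Perm (Fin n), ∀ i, D' i = D (σ i)

/-- `D` is levelled w.r.t. `(A,B)`: it lies in `[A,B]` and no levelling operation staying
within `[A,B]` strictly decreases its spread. -/
def IsLevelled {n : ℕ} (A B D : Fin n → ℕ) : Prop :=
  Between A D B ∧ ∀ α β : Fin n, α ≠ β → D β < D α → Between A (lvl D α β) B →
    spread D ≤ spread (lvl D α β)

/-- One levelling step from `D` to `D'` staying within `[A,B]`. -/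
def LvlStep {n : ℕ} (A B D D' : Fin n → ℕ) : Prop :=
  ∃ α β : Fin n, α ≠ β ∧ D β < D α ∧ D' = lvl D α β ∧ Between A D' B

/-- `F(ℓ,S) = ∑_i (min(ℓ,b_i) - min(ℓ,a_i))`. -/
noncomputable def Fvol {n : ℕ} (A B : Fin n → ℕ) (ℓ : ℝ) : ℝ :=
  ∑ i, (min ℓ (B i : ℝ) - min ℓ (A i : ℝ))

/-- Upper deviation `δ_U(D,S) = ∑_i max(0, d_i - b_i)` (truncated subtraction). -/
def devU {n : ℕ} (D B : Fin n → ℕ) : ℕ := ∑ i, (D i - B i)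

/-- Lower deviation `δ_L(D,S) = ∑_i max(0, a_i - d_i)` (truncated subtraction). -/
def devL {n : ℕ} (D A : Fin n → ℕ) : ℕ := ∑ i, (A i - D i)

/-- `R` lies in `[B,⊤]`, `(A,R)` is realizable, and `∑ (r_i - b_i)` is minimum. -/
def MinUpper {n : ℕ} (A B R : Fin n → ℕ) : Prop :=
  (∀ i, B i ≤ R i ∧ R i ≤ n - 1) ∧ Realizable A R ∧
  ∀ R' : Fin n → ℕ, (∀ i, B i ≤ R' i ∧ R' i ≤ n - 1) → Realizable A R' →
    ∑ i, (R i - B i) ≤ ∑ i, (R' i - B i)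

lemma abs_sub_pred_add_abs_sub_succ_le {a b : ℤ} (h : b < a) (x : ℤ) :
    |a - 1 - x| + |b + 1 - x| ≤ |a - x| + |b - x| := by
  rcases abs_cases (a - 1 - x) with h₁ | h₁ <;> rcases abs_cases (b + 1 - x) with h₂ | h₂ <;>
    rcases abs_cases (a - x) with h₃ | h₃ <;> rcases abs_cases (b - x) with h₄ | h₄ <;> linarith

lemma two_mul_spread {n : ℕ} (D : Fin n → ℕ) :
    2 * spread D = ∑ r, ∑ s, |(D r : ℤ) - D s| := by
  have swapped : spread D = ∑ r, ∑ s, if s < r then |(D r : ℤ) - D s| else 0 := by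
    rw [spread, sum_comm]
    simp only [abs_sub_comm]
  rw [two_mul]
  nth_rw 2 [swapped]
  rw [spread, ← sum_add_distrib]
  refine sum_congr rfl fun r _ => ?_
  rw [← sum_add_distrib]
  refine sum_congr rfl fun s _ => ?_
  rcases lt_trichotomy r s with h | rfl | h
  · simp [h, h.not_gt]
  · simp
  · simp [h, h.not_gt]

section Lvl

variable {n : ℕ} (D : Fin n → ℕ) {α β : Fin n}

lemma lvl_apply_left : lvl D α β α = D α - 1 := if_pos rfl

lemma lvl_apply_right (hne : α ≠ β) : lvl D α β β = D β + 1 := by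
  simp [lvl, hne.symm]

lemma lvl_apply_of_ne {i : Fin n} (hiα : i ≠ α) (hiβ : i ≠ β) : lvl D α β i = D i := by
  simp [lvl, hiα, hiβ]

end Lvl

section LevelPair

variable {ι : Type*} [Fintype ι] [DecidableEq ι] {f g : ι → ℤ} {α β : ι}

lemma Finset.sum_eq_add_add_sum_compl_pair {M : Type*} [AddCommMonoid M] (hne : α ≠ β)
    (φ : ι → M) :
    ∑ i, φ i = φ α + φ β + ∑ i ∈ {α, β}ᶜ, φ i := by
  rw [← sum_pair hne, sum_add_sum_compl]

variable (hne : α ≠ β) (hα : g α = f α - 1) (hβ : g β = f β + 1)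
  (hfix : ∀ i, i ≠ α → i ≠ β → g i = f i) (h : f β + 2 ≤ f α)
include hne hα hβ hfix h

lemma sum_abs_sub_le_of_ne_of_ne {r : ι} (hrα : r ≠ α) (hrβ : r ≠ β) :
    ∑ s, |g r - g s| ≤ ∑ s, |f r - f s| := by
  rw [sum_eq_add_add_sum_compl_pair hne, sum_eq_add_add_sum_compl_pair hne (fun s => |f r - f s|)]
  have hrest : ∑ s ∈ {α, β}ᶜ, |g r - g s| = ∑ s ∈ {α, β}ᶜ, |f r - f s| := by
    refine sum_congr rfl fun s hs => ?_
    simp only [mem_compl, mem_insert, mem_singleton, not_or] at hs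
    rw [hfix r hrα hrβ, hfix s hs.1 hs.2]
  have hpair := abs_sub_pred_add_abs_sub_succ_le (by omega : f β < f α) (f r)
  rw [hrest, hα, hβ, hfix r hrα hrβ, abs_sub_comm (f r), abs_sub_comm (f r), abs_sub_comm (f r),
    abs_sub_comm (f r)]
  linarith

lemma sum_abs_sub_add_abs_sub_add_four_le :
    ∑ s, (|g α - g s| + |g β - g s|) + 4 ≤ ∑ s, (|f α - f s| + |f β - f s|) := by
  rw [sum_eq_add_add_sum_compl_pair hne,
    sum_eq_add_add_sum_compl_pair hne (fun s => |f α - f s| + |f β - f s|)]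
  have hrest : ∑ s ∈ {α, β}ᶜ, (|g α - g s| + |g β - g s|) ≤
      ∑ s ∈ {α, β}ᶜ, (|f α - f s| + |f β - f s|) := by
    refine sum_le_sum fun s hs => ?_
    simp only [mem_compl, mem_insert, mem_singleton, not_or] at hs
    rw [hα, hβ, hfix s hs.1 hs.2]
    exact abs_sub_pred_add_abs_sub_succ_le (by omega) (f s)
  have hd : |f α - f β| = f α - f β := abs_of_nonneg (by omega)
  have hgd : |g α - g β| = f α - f β - 2 := by rw [hα, hβ, abs_of_nonneg (by omega)]; ring
  rw [abs_sub_comm (f β), abs_sub_comm (g β), hd, hgd]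
  simp only [sub_self, abs_zero]
  linarith

lemma sum_sum_abs_sub_add_four_le :
    ∑ r, ∑ s, |g r - g s| + 4 ≤ ∑ r, ∑ s, |f r - f s| := by
  rw [sum_eq_add_add_sum_compl_pair hne,
    sum_eq_add_add_sum_compl_pair hne (fun r => ∑ s, |f r - f s|)]
  have hrest : ∑ r ∈ {α, β}ᶜ, ∑ s, |g r - g s| ≤ ∑ r ∈ {α, β}ᶜ, ∑ s, |f r - f s| := by
    refine sum_le_sum fun r hr => ?_
    simp only [mem_compl, mem_insert, mem_singleton, not_or] at hr
    exact sum_abs_sub_le_of_ne_of_ne hne hα hβ hfix h hr.1 hr.2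
  have hpair := sum_abs_sub_add_abs_sub_add_four_le hne hα hβ hfix h
  rw [sum_add_distrib, sum_add_distrib] at hpair
  linarith

end LevelPair

theorem stmt_0 {n : ℕ} (D : Fin n → ℕ) (α β : Fin n) (hne : α ≠ β)
    (h : D β + 2 ≤ D α) :
    spread (lvl D α β) ≤ spread D - 2 := by
  have key := sum_sum_abs_sub_add_four_le (f := fun i => (D i : ℤ))
    (g := fun i => (lvl D α β i : ℤ)) hne
    (by simp only [lvl_apply_left]; omega) (by simp [lvl_apply_right D hne])
    (fun i hiα hiβ => by simp [lvl_apply_of_ne D hiα hiβ]) (by exact_mod_cast h)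
  have hD := two_mul_spread D
  have hD' := two_mul_spread (lvl D α β)
  omega
end

section
/- Let D = (d_1,...,d_n) be a graphic sequence (i.e., realized as the degree sequence of some simple undirected graph on n vertices), and let α ≠ β satisfy d_α > d_β. Then the sequence π(D,α,β) obtained by decrementing d_α by 1 and incrementing d_β by 1 is also graphic. -/
/-!
Realize `D` by a graph `G`. Since `deg α > deg β`, some neighbour `v ≠ β` of `α` is not a
neighbour of `β`. Replacing the edge `αv` by `βv` lowers the degree of `α` by one, raises that
of `β` by one and leaves every other degree, including that of `v`, unchanged.
-/

open Finset

namespace SimpleGraph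

variable {V : Type*} {G : SimpleGraph V}

theorem degree_edge [DecidableEq V] {u v : V} (huv : u ≠ v) (w : V)
    [Fintype ((edge u v).neighborSet w)] :
    (edge u v).degree w = if w = u ∨ w = v then 1 else 0 := by
  rw [← card_neighborFinset_eq_degree]
  split_ifs with hw
  · rw [card_eq_one]
    rcases hw with rfl | rfl
    · exact ⟨v, by ext; simp only [mem_neighborFinset, edge_adj, mem_singleton]; grind⟩
    · exact ⟨u, by ext; simp only [mem_neighborFinset, edge_adj, mem_singleton]; grind⟩
  · rw [card_eq_zero]
    ext x
    simp only [mem_neighborFinset, edge_adj, notMem_empty, iff_false]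
    tauto

theorem exists_adj_not_adj_of_degree_lt {a b : V} [Fintype (G.neighborSet a)]
    [Fintype (G.neighborSet b)] (h : G.degree b < G.degree a) :
    ∃ v, v ≠ b ∧ G.Adj a v ∧ ¬G.Adj b v := by
  classical
  by_contra! hcon
  have hsub : (G.neighborFinset a).erase b ⊆ (G.neighborFinset b).erase a := fun v hv => by
    simp only [mem_erase, mem_neighborFinset] at hv ⊢
    exact ⟨hv.2.ne', hcon v hv.1 hv.2⟩
  have hcard := card_le_card hsub
  simp only [card_erase_eq_ite, mem_neighborFinset, card_neighborFinset_eq_degree,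
    G.adj_comm b a] at hcard
  split_ifs at hcard with hab
  · have := hab.degree_pos_right
    omega
  · omega

theorem degree_sdiff_edge_sup_edge_add_degree_edge {a b v : V}
    (hav : G.Adj a v) (hbv : ¬G.Adj b v) (w : V)
    [Fintype (((G \ edge a v) ⊔ edge b v).neighborSet w)]
    [Fintype (G.neighborSet w)] [Fintype ((edge a v).neighborSet w)]
    [Fintype ((edge b v).neighborSet w)] :
    ((G \ edge a v) ⊔ edge b v).degree w + (edge a v).degree w =
      G.degree w + (edge b v).degree w := by
  classical
  have : Fintype ((G \ edge a v).neighborSet w) :=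
    Set.fintypeSubset (G.neighborSet w) fun x hx => hx.1
  have hsub : (edge a v).neighborFinset w ⊆ G.neighborFinset w := by
    simpa [← coe_subset] using neighborSet_mono ((edge_le_iff G).2 (Or.inr hav)) w
  have hdisj : Disjoint (G.neighborFinset w) ((edge b v).neighborFinset w) :=
    disjoint_neighborFinset_of_disjoint _ _ _ ((disjoint_edge G).2 hbv)
  simp only [← card_neighborFinset_eq_degree, neighborFinset_sup, neighborFinset_sdiff,
    card_union_of_disjoint (hdisj.mono_left sdiff_subset)]
  rw [add_right_comm, card_sdiff_add_card_eq_card hsub]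

end SimpleGraph

theorem stmt_1_general {n : ℕ} (D : Fin n → ℕ) (hD : IsGraphic D) (α β : Fin n)
    (h : D β < D α) :
    IsGraphic (lvl D α β) := by
  obtain ⟨G, _, hG⟩ := hD
  obtain ⟨v, hvβ, hαv, hβv⟩ :=
    G.exists_adj_not_adj_of_degree_lt (by rwa [hG, hG] : G.degree β < G.degree α)
  refine ⟨G \ SimpleGraph.edge α v ⊔ SimpleGraph.edge β v, inferInstance, fun w => ?_⟩
  have hmove := G.degree_sdiff_edge_sup_edge_add_degree_edge hαv hβv w
  rw [hG, SimpleGraph.degree_edge hαv.ne, SimpleGraph.degree_edge hvβ.symm] at hmove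
  have hvα : v ≠ α := hαv.ne'
  have hαβ : α ≠ β := ne_of_apply_ne D h.ne'
  simp only [lvl]
  split_ifs at hmove ⊢ <;> subst_vars <;> omega

theorem stmt_1 {n : ℕ} (D : Fin n → ℕ) (hD : IsGraphic D) (α β : Fin n)
    (hne : α ≠ β) (h : D β < D α) :
    IsGraphic (lvl D α β) :=
  stmt_1_general D hD α β h
end

section
/- All levelled sequences with respect to a fixed interval sequence S = (A,B) having the same volume L are similar (i.e., permutations of one another). -/
open Finset

/-- Two sequences are similar if one is a permutation of the other. -/
def SeqSimilar {n : ℕ} (D D' : Fin n → ℕ) : Prop :=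
  ∃ σ : Equiv.Perm (Fin n), ∀ i, D' i = D (σ i)

lemma cast_lvl {n : ℕ} (D : Fin n → ℕ) {α β : Fin n} (hne : α ≠ β) (hα : 0 < D α) (r : Fin n) :
    (lvl D α β r : ℤ) = D r - (if r = α then 1 else 0) + (if r = β then 1 else 0) := by
  unfold lvl
  split_ifs <;> subst_vars <;> omega

lemma spread_lvl_lt {n : ℕ} (D : Fin n → ℕ) {α β : Fin n} (hne : α ≠ β) (h : D β + 2 ≤ D α) :
    spread (lvl D α β) < spread D := by
  -- Pairing each pair `(r, s)` with its image under the swap `α ↔ β` makes the change in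
  -- `∑ |dᵣ - dₛ|` termwise non-positive, and negative at `(α, β)`.
  set τ := Equiv.swap α β
  let paired (E : Fin n → ℕ) (r s : Fin n) : ℤ := |(E r : ℤ) - E s| + |(E (τ r) : ℤ) - E (τ s)|
  have paired_le (r s : Fin n) : paired (lvl D α β) r s ≤ paired D r s := by
    simp only [paired, cast_lvl D hne (by omega), τ, Equiv.swap_apply_def]
    split_ifs <;> subst_vars <;> simp only [abs_eq_max_neg] <;> omega
  have paired_lt : paired (lvl D α β) α β < paired D α β := by
    simp only [paired, cast_lvl D hne (by omega), τ, Equiv.swap_apply_left, Equiv.swap_apply_right]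
    simp only [hne, hne.symm, if_true, if_false, abs_eq_max_neg]
    omega
  have sum_paired (E : Fin n → ℕ) : ∑ r, ∑ s, paired E r s = 4 * spread E := by
    have hτ : ∑ r, ∑ s, |(E (τ r) : ℤ) - E (τ s)| = ∑ r, ∑ s, |(E r : ℤ) - E s| :=
      Equiv.sum_comp τ (fun r => ∑ s, |(E r : ℤ) - E (τ s)|) |>.trans
        (sum_congr rfl fun r _ => Equiv.sum_comp τ (fun s => |(E r : ℤ) - E s|))
    simp only [paired, sum_add_distrib, hτ, ← two_mul_spread]
    ring
  have : ∑ r, ∑ s, paired (lvl D α β) r s < ∑ r, ∑ s, paired D r s :=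
    sum_lt_sum (fun r _ => sum_le_sum fun s _ => paired_le r s)
      ⟨α, mem_univ _, sum_lt_sum (fun s _ => paired_le α s) ⟨β, mem_univ _, paired_lt⟩⟩
  rw [sum_paired, sum_paired] at this
  omega

lemma between_lvl {n : ℕ} {A B D : Fin n → ℕ} {α β : Fin n} (hD : Between A D B)
    (hα : A α < D α) (hβ : D β < B β) : Between A (lvl D α β) B := by
  intro i
  have := hD i
  unfold lvl
  split_ifs <;> subst_vars <;> omega

lemma IsLevelled.le_add_one {n : ℕ} {A B D : Fin n → ℕ} (hD : IsLevelled A B D) {α β : Fin n}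
    (hα : A α < D α) (hβ : D β < B β) : D α ≤ D β + 1 := by
  by_contra! h
  have hne : α ≠ β := by rintro rfl; omega
  exact (hD.2 α β hne (by omega) (between_lvl hD.1 hα hβ)).not_gt (spread_lvl_lt D hne h)

def fill {ι : Type*} (A B : ι → ℕ) (ℓ : ℕ) (i : ι) : ℕ := min (max ℓ (A i)) (B i)

def LiesAtLevel {ι : Type*} (A B : ι → ℕ) (ℓ : ℕ) (D : ι → ℕ) : Prop :=
  ∀ i, fill A B ℓ i ≤ D i ∧ D i ≤ fill A B (ℓ + 1) i

lemma IsLevelled.exists_liesAtLevel {n : ℕ} {A B D : Fin n → ℕ} (hD : IsLevelled A B D) :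
    ∃ ℓ, LiesAtLevel A B ℓ D := by
  classical
  set M := (univ.filter fun i => A i < D i).sup D
  refine ⟨M - 1, fun i => ?_⟩
  have hup : A i < D i → D i ≤ M := fun h => le_sup (mem_filter.2 ⟨mem_univ _, h⟩)
  have hlow : D i < B i → M ≤ D i + 1 := fun h =>
    Finset.sup_le fun j hj => hD.le_add_one (mem_filter.1 hj).2 h
  have := hD.1 i
  unfold fill
  omega

lemma card_fiber_of_liesAtLevel {ι : Type*} [Fintype ι] {A B D : ι → ℕ} {ℓ : ℕ}
    (hD : LiesAtLevel A B ℓ D) (v : ℕ) :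
    (#{i | D i = v} : ℤ) = #{i | fill A B ℓ i = v} +
      ((∑ i, D i : ℕ) - (∑ i, fill A B ℓ i : ℕ)) *
        ((if ℓ + 1 = v then 1 else 0) - (if ℓ = v then 1 else 0)) := by
  -- Pointwise `[dᵢ = v] = [fᵢ = v] + (dᵢ - fᵢ) ([ℓ + 1 = v] - [ℓ = v])` for `f = fill A B ℓ`,
  -- since `dᵢ ≠ fᵢ` forces `fᵢ = ℓ` and `dᵢ = ℓ + 1`.
  simp only [card_filter, Nat.cast_sum, sum_mul, ← sum_sub_distrib, ← sum_add_distrib]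
  refine sum_congr rfl fun i _ => ?_
  have := hD i
  unfold fill at *
  split_ifs <;> push_cast <;> omega

lemma card_fiber_eq_of_liesAtLevel {ι : Type*} [Fintype ι] {A B C D : ι → ℕ} {ℓC ℓD : ℕ}
    (hC : LiesAtLevel A B ℓC C) (hD : LiesAtLevel A B ℓD D) (hsum : ∑ i, C i = ∑ i, D i)
    (v : ℕ) : #{i | C i = v} = #{i | D i = v} := by
  wlog hle : ℓC ≤ ℓD generalizing C D ℓC ℓD
  · exact (this hD hC hsum.symm (by omega)).symm
  obtain rfl | hlt := hle.eq_or_lt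
  · have := card_fiber_of_liesAtLevel hC v
    rw [hsum, ← card_fiber_of_liesAtLevel hD v] at this
    exact_mod_cast this
  · have hCD : ∀ i ∈ univ, C i ≤ D i := fun i _ => by
      have := hC i; have := hD i; unfold fill at *; omega
    have := (sum_eq_sum_iff_of_le hCD).1 hsum
    simp only [mem_univ, forall_const] at this
    simp only [this]

lemma seqSimilar_of_card_fiber_eq {n : ℕ} {C D : Fin n → ℕ}
    (h : ∀ v, #{i | C i = v} = #{i | D i = v}) : SeqSimilar C D := by
  classical
  have e (v : ℕ) : {i // D i = v} ≃ {i // C i = v} :=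
    Fintype.equivOfCardEq (by rw [Fintype.card_subtype, Fintype.card_subtype, h v])
  exact ⟨Equiv.ofFiberEquiv e, fun i => (Equiv.ofFiberEquiv_map e i).symm⟩

lemma vol_add_sum {n : ℕ} {A D : Fin n → ℕ} (h : ∀ i, A i ≤ D i) :
    vol A D + ∑ i, A i = ∑ i, D i := by
  rw [vol, ← sum_add_distrib]
  exact sum_congr rfl fun i _ => Nat.sub_add_cancel (h i)

theorem stmt_8_general {n : ℕ} (A B C D : Fin n → ℕ)
    (hC : IsLevelled A B C) (hD : IsLevelled A B D)
    (hvol : vol A C = vol A D) :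
    SeqSimilar C D := by
  obtain ⟨ℓC, hℓC⟩ := hC.exists_liesAtLevel
  obtain ⟨ℓD, hℓD⟩ := hD.exists_liesAtLevel
  have hsum : ∑ i, C i = ∑ i, D i := by
    rw [← vol_add_sum fun i => (hC.1 i).1, ← vol_add_sum fun i => (hD.1 i).1, hvol]
  exact seqSimilar_of_card_fiber_eq (card_fiber_eq_of_liesAtLevel hℓC hℓD hsum)

theorem stmt_8 {n : ℕ} (A B C D : Fin n → ℕ)
    (hS : ∀ i, A i ≤ B i ∧ B i ≤ n - 1)
    (hC : IsLevelled A B C) (hD : IsLevelled A B D)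
    (hvol : vol A C = vol A D) :
    SeqSimilar C D :=
  stmt_8_general A B C D hC hD hvol
end

section
/- For any interval sequence S = (A,B), min over all graphic sequences D of δ(D,S) equals min over all graphic sequences D with D ≥ A of δ_U(D,S), where δ_U(D,S) = Σ_i max(0, d_i − b_i), δ_L(D,S) = Σ_i max(0, a_i − d_i), and δ(D,S) = δ_U(D,S) + δ_L(D,S). -/
open Finset

/-!
If a graphic `D` has `d i < a i`, then `d i < n - 1`, so `i` has a non-neighbour `j`, and adding
the edge `ij` raises `d i` and `d j` by one. This lowers `δ_L` by one and raises `δ_U` by at most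
one, since `d i + 1 ≤ a i ≤ b i` and only `d j` can overshoot. Iterating until `D ≥ A` turns every
graphic `D` into a graphic `D' ≥ A` with `δ_U(D') ≤ δ(D)`; conversely `δ(D) = δ_U(D)` when `D ≥ A`.
-/

namespace SimpleGraph

variable {V : Type*} [Fintype V] [DecidableEq V] (G : SimpleGraph V) [DecidableRel G.Adj]
  {s t v : V}

lemma degree_sup_edge_left (hne : s ≠ t) (hn : ¬G.Adj s t) :
    (G ⊔ edge s t).degree s = G.degree s + 1 := by
  have : (G ⊔ edge s t).neighborFinset s = insert t (G.neighborFinset s) := by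
    ext w
    simp only [mem_neighborFinset, sup_adj, edge_adj, mem_insert]
    grind
  rw [← card_neighborFinset_eq_degree, this, card_insert_of_notMem (by simpa using hn),
    card_neighborFinset_eq_degree]

lemma degree_sup_edge_right (hne : s ≠ t) (hn : ¬G.Adj s t) :
    (G ⊔ edge s t).degree t = G.degree t + 1 := by
  convert G.degree_sup_edge_left hne.symm (fun h ↦ hn h.symm) using 2
  rw [edge_comm]

lemma degree_sup_edge_of_ne (hs : v ≠ s) (ht : v ≠ t) :
    (G ⊔ edge s t).degree v = G.degree v := by
  have : (G ⊔ edge s t).neighborFinset v = G.neighborFinset v := by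
    ext w
    simp only [mem_neighborFinset, sup_adj, edge_adj]
    grind
  rw [← card_neighborFinset_eq_degree, this, card_neighborFinset_eq_degree]

lemma exists_not_adj_of_degree_lt (h : G.degree v < Fintype.card V - 1) :
    ∃ w, w ≠ v ∧ ¬G.Adj v w := by
  by_contra! hall
  have : univ.erase v ⊆ G.neighborFinset v := fun w hw ↦ by
    simpa using hall w (mem_erase.mp hw).1
  have := card_le_card this
  rw [card_erase_of_mem (mem_univ v), card_univ, card_neighborFinset_eq_degree] at this
  omega

end SimpleGraph

section Graphic

variable {n : ℕ}

lemma isGraphic_zero : IsGraphic (0 : Fin n → ℕ) :=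
  ⟨⊥, inferInstance, SimpleGraph.bot_degree⟩

lemma IsGraphic.exists_add_single_add_single {D : Fin n → ℕ} (hD : IsGraphic D) {i : Fin n}
    (hi : D i < n - 1) : ∃ j, IsGraphic (D + Pi.single i 1 + Pi.single j 1) := by
  obtain ⟨G, _, hG⟩ := hD
  obtain ⟨j, hji, hn⟩ := G.exists_not_adj_of_degree_lt (v := i) (by rwa [hG, Fintype.card_fin])
  refine ⟨j, G ⊔ SimpleGraph.edge i j, inferInstance, fun k ↦ ?_⟩
  rcases eq_or_ne k i with rfl | hki
  · simp [G.degree_sup_edge_left hji.symm hn, hG, hji.symm]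
  rcases eq_or_ne k j with rfl | hkj
  · simp [G.degree_sup_edge_right hji.symm hn, hG, hki]
  · simp [G.degree_sup_edge_of_ne hki hkj, hG, hki, hkj]

end Graphic

section Deviation

variable {n : ℕ} {A B D : Fin n → ℕ}

lemma devL_eq_zero_iff : devL D A = 0 ↔ A ≤ D := by
  simp [devL, Pi.le_def, Nat.sub_eq_zero_iff_le]

lemma devL_add_single_le (j : Fin n) : devL (D + Pi.single j 1) A ≤ devL D A :=
  sum_le_sum fun k _ ↦ Nat.sub_le_sub_left (by simp) _

lemma devL_add_single_of_lt {i : Fin n} (h : D i < A i) :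
    devL (D + Pi.single i 1) A + 1 = devL D A := by
  calc devL (D + Pi.single i 1) A + 1
      = ∑ k, ((A k - (D k + (Pi.single i 1 : Fin n → ℕ) k))
          + (Pi.single i 1 : Fin n → ℕ) k) := by
        rw [sum_add_distrib, Fintype.sum_pi_single']; rfl
    _ = devL D A := sum_congr rfl fun k _ ↦ by
        rcases eq_or_ne k i with rfl | hk
        · simp only [Pi.single_eq_same]; omega
        · simp [hk]

lemma devU_add_single_le (j : Fin n) : devU (D + Pi.single j 1) B ≤ devU D B + 1 := by
  calc devU (D + Pi.single j 1) B
      ≤ ∑ k, ((D k - B k) + (Pi.single j 1 : Fin n → ℕ) k) := sum_le_sum fun k _ ↦ by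
        simp only [Pi.add_apply]; omega
    _ = devU D B + 1 := by rw [sum_add_distrib, Fintype.sum_pi_single']; rfl

lemma devU_add_single_of_lt {i : Fin n} (h : D i < B i) :
    devU (D + Pi.single i 1) B = devU D B := by
  refine sum_congr rfl fun k _ ↦ ?_
  rcases eq_or_ne k i with rfl | hk
  · simp only [Pi.add_apply, Pi.single_eq_same]; omega
  · simp [hk]

end Deviation

theorem IsGraphic.exists_ge_devU_le {n : ℕ} {A B D : Fin n → ℕ} (hD : IsGraphic D)
    (hAB : A ≤ B) (hA : ∀ i, A i ≤ n - 1) :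
    ∃ D', IsGraphic D' ∧ A ≤ D' ∧ devU D' B ≤ devU D B + devL D A := by
  induction h : devL D A using Nat.strong_induction_on generalizing D with
  | _ m ih =>
    by_cases hAD : A ≤ D
    · exact ⟨D, hD, hAD, Nat.le_add_right _ _⟩
    obtain ⟨i, hi⟩ : ∃ i, D i < A i := by simpa [Pi.le_def] using hAD
    obtain ⟨j, hD'⟩ := hD.exists_add_single_add_single (hi.trans_le (hA i))
    have hL : devL (D + Pi.single i 1 + Pi.single j 1) A < m := by
      have := devL_add_single_of_lt (A := A) hi
      have := devL_add_single_le (D := D + Pi.single i 1) (A := A) j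
      omega
    have hU : devU (D + Pi.single i 1 + Pi.single j 1) B ≤ devU D B + 1 :=
      (devU_add_single_le j).trans_eq (by rw [devU_add_single_of_lt (hi.trans_le (hAB i))])
    obtain ⟨D'', hD'', hAD'', hle⟩ := ih _ hL hD' rfl
    exact ⟨D'', hD'', hAD'', by omega⟩

theorem stmt_12 {n : ℕ} (A B : Fin n → ℕ)
    (hS : ∀ i, A i ≤ B i ∧ B i ≤ n - 1) :
    sInf {v : ℕ | ∃ D : Fin n → ℕ, IsGraphic D ∧ v = devU D B + devL D A} =
    sInf {v : ℕ | ∃ D : Fin n → ℕ, IsGraphic D ∧ (∀ i, A i ≤ D i) ∧ v = devU D B} := by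
  have hAB : A ≤ B := fun i ↦ (hS i).1
  have hA : ∀ i, A i ≤ n - 1 := fun i ↦ (hS i).1.trans (hS i).2
  obtain ⟨D₀, hD₀, hAD₀, -⟩ := isGraphic_zero.exists_ge_devU_le (B := B) hAB hA
  apply le_antisymm
  · refine le_csInf ⟨_, D₀, hD₀, hAD₀, rfl⟩ ?_
    rintro _ ⟨D, hD, hAD, rfl⟩
    exact Nat.sInf_le ⟨D, hD, by rw [devL_eq_zero_iff.mpr hAD, add_zero]⟩
  · refine le_csInf ⟨_, 0, isGraphic_zero, rfl⟩ ?_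
    rintro _ ⟨D, hD, rfl⟩
    obtain ⟨D', hD', hAD', hle⟩ := hD.exists_ge_devU_le hAB hA
    exact le_trans (Nat.sInf_le ⟨D', hD', hAD', rfl⟩) hle
end

section
/- Let D_z = (d_1,...,d_n) be a sequence and α < β ≤ n indices. For i ∈ [α+1, β], let E_{[α+1,i]} be the 0/1 characteristic vector of the index set {α+1,...,i}. Then the spread satisfies φ(D_z + E_{[α+1,i]}) = φ(D_z) + (i − α)(n − i − α), provided that D_z is non-increasing with d_{α+1} = ... = d_β and d_α > d_{α+1} > d_{β+1} whenever those indices exist. -/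
open Finset

lemma count_sum (n a b : ℕ) (hab : a ≤ b) (hbn : b ≤ n) :
    ∑ j : Fin n, (if a ≤ (j:ℕ) ∧ (j:ℕ) < b then (1:ℤ) else 0) = (b:ℤ) - a := by
  rw [Fin.sum_univ_eq_sum_range (fun j => if a ≤ j ∧ j < b then (1:ℤ) else 0) n]
  rw [← Finset.sum_filter]
  have h : (Finset.range n).filter (fun j => a ≤ j ∧ j < b) = Finset.Ico a b := by
    ext j; simp [Finset.mem_Ico]; omega
  rw [h, Finset.sum_const, Nat.card_Ico, nsmul_eq_mul, mul_one]
  push_cast [hab]; ring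


theorem stmt_15 {n α β i z : ℕ} (D : Fin n → ℕ)
    (hαβ : α < β) (hβn : β ≤ n)
    (hmono : ∀ j k : Fin n, j ≤ k → D k ≤ D j)
    (h1 : ∀ j : Fin n, (j : ℕ) < α → z < D j)
    (h2 : ∀ j : Fin n, α ≤ (j : ℕ) → (j : ℕ) < β → D j = z)
    (h3 : ∀ j : Fin n, β ≤ (j : ℕ) → D j < z)
    (hi1 : α < i) (hi2 : i ≤ β) :
    spread (fun j => D j + if α ≤ (j : ℕ) ∧ (j : ℕ) < i then 1 else 0) =
      spread D + ((i : ℤ) - (α : ℤ)) * ((n : ℤ) - (i : ℤ) - (α : ℤ)) := by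
  set D' : Fin n → ℕ := fun j => D j + if α ≤ (j : ℕ) ∧ (j : ℕ) < i then 1 else 0 with hD'
  have key : ∀ r s : Fin n,
      (if r < s then |(D' r : ℤ) - (D' s : ℤ)| else 0) =
      (if r < s then |(D r : ℤ) - (D s : ℤ)| else 0) +
        ((if α ≤ (r:ℕ) ∧ (r:ℕ) < i then (1:ℤ) else 0) * (if i ≤ (s:ℕ) ∧ (s:ℕ) < n then (1:ℤ) else 0)
        - (if 0 ≤ (r:ℕ) ∧ (r:ℕ) < α then (1:ℤ) else 0) * (if α ≤ (s:ℕ) ∧ (s:ℕ) < i then (1:ℤ) else 0)) := by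
    intro r s
    by_cases hrs : r < s
    · have hrs' : (r:ℕ) < (s:ℕ) := hrs
      have hDs : D s ≤ D r := hmono r s (le_of_lt hrs)
      have h1r := h1 r; have h2r := h2 r; have h3r := h3 r
      have h1s := h1 s; have h2s := h2 s; have h3s := h3 s
      have hsn : (s:ℕ) < n := s.isLt
      have hD's : D' s ≤ D' r := by
        simp only [hD']; split_ifs <;> omega
      rw [if_pos hrs, if_pos hrs,
        abs_of_nonneg (sub_nonneg.mpr (by exact_mod_cast hD's)),
        abs_of_nonneg (sub_nonneg.mpr (by exact_mod_cast hDs : (D s : ℤ) ≤ (D r : ℤ)))]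
      simp only [hD']
      push_cast
      split_ifs <;> omega
    · have hrs' : ¬ (r:ℕ) < (s:ℕ) := hrs
      rw [if_neg hrs, if_neg hrs]
      split_ifs <;> omega
  have hsum : spread D' = spread D +
      ((∑ r : Fin n, if α ≤ (r:ℕ) ∧ (r:ℕ) < i then (1:ℤ) else 0) *
       (∑ s : Fin n, if i ≤ (s:ℕ) ∧ (s:ℕ) < n then (1:ℤ) else 0)
      - (∑ r : Fin n, if 0 ≤ (r:ℕ) ∧ (r:ℕ) < α then (1:ℤ) else 0) *
       (∑ s : Fin n, if α ≤ (s:ℕ) ∧ (s:ℕ) < i then (1:ℤ) else 0)) := by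
    unfold spread
    rw [Finset.sum_mul, Finset.sum_mul, ← Finset.sum_sub_distrib, ← Finset.sum_add_distrib]
    refine Finset.sum_congr rfl fun r _ => ?_
    rw [Finset.mul_sum, Finset.mul_sum, ← Finset.sum_sub_distrib, ← Finset.sum_add_distrib]
    exact Finset.sum_congr rfl fun s _ => key r s
  rw [hsum, count_sum n α i (le_of_lt hi1) (le_trans hi2 hβn),
    count_sum n i n (le_trans hi2 hβn) le_rfl,
    count_sum n 0 α (Nat.zero_le _) (le_trans (le_of_lt hαβ) hβn)]
  push_cast
  ring
end

section
/- Let A = (a_1,...,a_p) be a sequence of nonnegative integers and M = max_i a_i. Then there exists an integer n with max(p, M) ≤ n ≤ p + M and nonnegative integers d_{p+1},...,d_n such that (a_1,...,a_p,d_{p+1},...,d_n) is graphic. In particular, every sequence admits a graphic extension of length at most p + M, realized e.g. by a bipartite graph in which vertex x_i is joined to y_1,...,y_{a_i}. -/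
open Finset

/-! In the bipartite graph on `{x_1, …, x_p} ⊔ {y_1, …, y_M}` joining `x_i` to
`y_1, …, y_{a_i}`, the vertex `x_i` has degree `a_i`; listing the `x_i` first turns its
`p + M` degrees into a graphic extension of `A`. -/

theorem isGraphic_degree_comp_equiv {V : Type*} [Fintype V] (G : SimpleGraph V)
    [DecidableRel G.Adj] {n : ℕ} (e : Fin n ≃ V) : IsGraphic fun i => G.degree (e i) :=
  ⟨G.comap e, inferInstance, fun i => ((SimpleGraph.Iso.comap e G).degree_eq i).symm⟩

namespace SimpleGraph

variable {α β : Type*} (r : α → β → Prop)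

def bipartiteOfRel : SimpleGraph (α ⊕ β) where
  Adj
    | .inl a, .inr b | .inr b, .inl a => r a b
    | _, _ => False
  symm := ⟨by rintro (a | b) (a' | b') h <;> exact h⟩
  loopless := ⟨by rintro (a | b) h <;> exact h⟩

instance [DecidableRel r] : DecidableRel (bipartiteOfRel r).Adj
  | .inl a, .inr b | .inr b, .inl a => inferInstanceAs (Decidable (r a b))
  | .inl _, .inl _ | .inr _, .inr _ => isFalse id

@[simp]
theorem bipartiteOfRel_adj_inl_inr {a : α} {b : β} :
    (bipartiteOfRel r).Adj (.inl a) (.inr b) ↔ r a b :=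
  Iff.rfl

@[simp]
theorem not_bipartiteOfRel_adj_inl_inl {a a' : α} : ¬(bipartiteOfRel r).Adj (.inl a) (.inl a') :=
  id

variable [Fintype α] [Fintype β] [DecidableRel r]

theorem neighborFinset_bipartiteOfRel_inl (a : α) :
    (bipartiteOfRel r).neighborFinset (.inl a) = ({b | r a b} : Finset β).map .inr := by
  ext (a' | b) <;> simp

theorem degree_bipartiteOfRel_inl (a : α) :
    (bipartiteOfRel r).degree (.inl a) = #{b | r a b} := by
  rw [← card_neighborFinset_eq_degree, neighborFinset_bipartiteOfRel_inl, card_map]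

end SimpleGraph

theorem stmt_17 {p : ℕ} (A : Fin p → ℕ) :
    ∃ (n : ℕ) (hpn : p ≤ n),
      max p (Finset.univ.sup A) ≤ n ∧ n ≤ p + Finset.univ.sup A ∧
      ∃ D : Fin n → ℕ, IsGraphic D ∧ ∀ i : Fin p, D (Fin.castLE hpn i) = A i := by
  set M := Finset.univ.sup A
  let G := SimpleGraph.bipartiteOfRel fun (i : Fin p) (j : Fin M) => (j : ℕ) < A i
  refine ⟨p + M, Nat.le_add_right p M, by omega, le_rfl, _,
    isGraphic_degree_comp_equiv G finSumFinEquiv.symm, fun i => ?_⟩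
  have hAi : A i ≤ M := le_sup (mem_univ i)
  change G.degree (finSumFinEquiv.symm (Fin.castAdd M i)) = A i
  rw [finSumFinEquiv_symm_apply_castAdd, SimpleGraph.degree_bipartiteOfRel_inl,
    Fin.card_filter_val_lt, min_eq_right hAi]
end
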